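/- arXiv:2406.17058 — 3 statements merged into one kernel-verified Lean document; each statement's English description precedes it below -/
import Mathlib

section
/- Let (e_k)_{k ≥ 1} be a sequence of independent random variables on a probability space, each exponentially distributed with rate 1. Then the random series J* = (2/π²) Σ_{k=1}^∞ e_k/(k − 1/2)² converges almost surely, and for every t ≥ 0 its Laplace transform satisfies E[exp(−t J*)] = 1/cosh(√(2t)). -/
/-!
The weights `(k + 1/2)⁻²` are summable and the `e k` are nonnegative with finite mean, so the
series has finite expectation and converges almost surely. By independence, the Laplace
transform of a partial sum is `∏ (1 + 2t / (π² (k + 1/2)²))⁻¹`, and dominated convergence (the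
integrands are bounded by `1`) identifies the limit with `E[exp(-t J*)]`. The product tends to
`1 / cosh √(2t)` by Euler's product `cosh x = ∏ (1 + x² / (π² (k + 1/2)²))`, which follows from
the sine product evaluated at `i x` through `cosh x = sinh (2x) / (2 sinh x)`: the factors of
the product for `sinh (2x)` split into those of `cosh x` (even indices) and of `sinh x` (odd
indices).
-/

open MeasureTheory ProbabilityTheory Real Filter Set Topology
open scoped ENNReal

section EulerProducts

open Finset

theorem Real.tendsto_euler_sinh_prod (x : ℝ) :
    Tendsto (fun n : ℕ => x * ∏ j ∈ range n, (1 + x ^ 2 / (π * (j + 1)) ^ 2)) atTop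
      (𝓝 (sinh x)) := by
  have hπ : (π : ℂ) ≠ 0 := Complex.ofReal_ne_zero.mpr pi_ne_zero
  have h := Complex.tendsto_euler_sin_prod (x * Complex.I / π)
  have hz : (π : ℂ) * (x * Complex.I / π) = x * Complex.I := by field_simp
  have hterm (n : ℕ) : (π : ℂ) * (x * Complex.I / π) *
      ∏ j ∈ range n, (1 - (x * Complex.I / π) ^ 2 / ((j : ℂ) + 1) ^ 2) =
      ((x * ∏ j ∈ range n, (1 + x ^ 2 / (π * (j + 1)) ^ 2) : ℝ) : ℂ) * Complex.I := by
    push_cast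
    rw [hz, mul_right_comm]
    congr 2
    refine prod_congr rfl fun j _ => ?_
    field_simp
    rw [Complex.I_sq]
    ring
  simp_rw [hterm] at h
  rw [hz, Complex.sin_mul_I, ← Complex.ofReal_sinh] at h
  simpa only [Function.comp_def, Complex.mul_I_im, Complex.ofReal_re] using
    (Complex.continuous_im.tendsto _).comp h

theorem Finset.prod_range_two_mul {M : Type*} [CommMonoid M] (f : ℕ → M) (n : ℕ) :
    ∏ j ∈ range (2 * n), f j =
      (∏ j ∈ range n, f (2 * j)) * ∏ j ∈ range n, f (2 * j + 1) := by
  induction n with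
  | zero => simp
  | succ n ih =>
    rw [mul_add_one, prod_range_succ, prod_range_succ, ih, prod_range_succ, prod_range_succ]
    ac_rfl

theorem Real.tendsto_euler_cosh_prod (x : ℝ) :
    Tendsto (fun n : ℕ => ∏ j ∈ range n, (1 + x ^ 2 / (π * (j + 1 / 2)) ^ 2)) atTop
      (𝓝 (cosh x)) := by
  rcases eq_or_ne x 0 with rfl | hx
  · simp
  have hsinh_ne : sinh x ≠ 0 := sinh_ne_zero.mpr hx
  have hratio : Tendsto
      (fun n : ℕ => (2 * x * ∏ j ∈ range (2 * n), (1 + (2 * x) ^ 2 / (π * (j + 1)) ^ 2)) /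
        (2 * (x * ∏ j ∈ range n, (1 + x ^ 2 / (π * (j + 1)) ^ 2))))
      atTop (𝓝 (sinh (2 * x) / (2 * sinh x))) :=
    ((tendsto_euler_sinh_prod (2 * x)).comp (tendsto_id.const_mul_atTop' two_pos)).div
      ((tendsto_euler_sinh_prod x).const_mul 2) (by simpa using hsinh_ne)
  rw [sinh_two_mul, mul_assoc, mul_div_mul_left _ _ two_ne_zero,
    mul_div_cancel_left₀ _ hsinh_ne] at hratio
  refine hratio.congr fun n => ?_
  have heven (j : ℕ) : 1 + (2 * x) ^ 2 / (π * (↑(2 * j) + 1)) ^ 2 =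
      1 + x ^ 2 / (π * (j + 1 / 2)) ^ 2 := by
    push_cast
    field_simp
  have hodd (j : ℕ) : 1 + (2 * x) ^ 2 / (π * (↑(2 * j + 1) + 1)) ^ 2 =
      1 + x ^ 2 / (π * (j + 1)) ^ 2 := by
    push_cast
    field_simp
    ring
  simp only [prod_range_two_mul, heven, hodd]
  field_simp

end EulerProducts

namespace ProbabilityTheory

variable {r u : ℝ}

lemma ae_nonneg_expMeasure (r : ℝ) : ∀ᵐ x ∂expMeasure r, 0 ≤ x := by
  simp only [ae_iff, not_le, Iio_def]
  exact (withDensity_apply _ measurableSet_Iio).trans (lintegral_exponentialPDF_of_nonpos le_rfl)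

lemma exponentialPDFReal_mul_exp (r u x : ℝ) :
    exponentialPDFReal r x * exp (u * x) =
      (Ici 0).indicator (fun x => r * exp ((u - r) * x)) x := by
  by_cases hx : 0 ≤ x
  · simp only [exponentialPDFReal, gammaPDFReal, hx, indicator_of_mem (mem_Ici.mpr hx), if_true]
    simp only [rpow_one, Gamma_one, div_one, sub_self, rpow_zero, mul_one, mul_assoc, ← exp_add]
    ring_nf
  · simp [exponentialPDFReal, gammaPDFReal, hx]

lemma integral_expMeasure (hr : 0 < r) (g : ℝ → ℝ) :
    ∫ x, g x ∂expMeasure r = ∫ x, exponentialPDFReal r x * g x := by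
  change ∫ x, g x ∂volume.withDensity (fun x => ENNReal.ofReal (exponentialPDFReal r x)) = _
  rw [integral_withDensity_eq_integral_toReal_smul
    (measurable_exponentialPDFReal r).ennreal_ofReal (ae_of_all _ fun _ => ENNReal.ofReal_lt_top)]
  simp [ENNReal.toReal_ofReal (exponentialPDFReal_nonneg hr _)]

lemma integrable_expMeasure_iff (hr : 0 < r) {g : ℝ → ℝ} :
    Integrable g (expMeasure r) ↔ Integrable (fun x => exponentialPDFReal r x * g x) := by
  change Integrable g (volume.withDensity fun x => ENNReal.ofReal (exponentialPDFReal r x)) ↔ _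
  rw [integrable_withDensity_iff (measurable_exponentialPDFReal r).ennreal_ofReal
    (ae_of_all _ fun _ => ENNReal.ofReal_lt_top)]
  simp [ENNReal.toReal_ofReal (exponentialPDFReal_nonneg hr _), mul_comm]

lemma integrable_exp_mul_expMeasure (hr : 0 < r) (hu : u < r) :
    Integrable (fun x => exp (u * x)) (expMeasure r) := by
  simp_rw [integrable_expMeasure_iff hr, exponentialPDFReal_mul_exp]
  rw [integrable_indicator_iff measurableSet_Ici, integrableOn_Ici_iff_integrableOn_Ioi]
  exact (integrableOn_exp_mul_Ioi (by linarith) 0).const_mul r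

lemma mgf_id_expMeasure (hr : 0 < r) (hu : u < r) : mgf id (expMeasure r) u = r / (r - u) := by
  simp_rw [mgf, id, integral_expMeasure hr, exponentialPDFReal_mul_exp]
  rw [integral_indicator measurableSet_Ici, integral_Ici_eq_integral_Ioi, integral_const_mul,
    integral_exp_mul_Ioi (by linarith), mul_zero, exp_zero]
  rw [← neg_sub r u, div_neg, neg_div, neg_neg, mul_one_div]

lemma integrable_id_expMeasure (hr : 0 < r) : Integrable id (expMeasure r) :=
  integrable_of_mem_interior_integrableExpSet <|
    interior_mono (fun _ hu => integrable_exp_mul_expMeasure hr hu)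
      ((isOpen_Iio (a := r)).interior_eq.symm ▸ hr)

variable {Ω : Type*} {mΩ : MeasurableSpace Ω} {μ : Measure Ω}

theorem ae_summable_mul_of_eLpNorm_le {ι : Type*} [Countable ι] {X : ι → Ω → ℝ} {c : ι → ℝ}
    {C : ℝ≥0∞} (hc : Summable c) (hX : ∀ i, AEStronglyMeasurable (X i) μ)
    (hXC : ∀ i, eLpNorm (X i) 1 μ ≤ C) (hC : C ≠ ∞) :
    ∀ᵐ ω ∂μ, Summable fun i => c i * X i ω := by
  have hc' : Summable fun i => ‖c i‖ := by simpa only [← Real.norm_eq_abs] using hc.abs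
  have hfin : ∑' i, eLpNorm (c i • X i) 1 μ ≠ ∞ := by
    simp_rw [eLpNorm_const_smul]
    refine ne_top_of_le_ne_top
      (ENNReal.mul_ne_top (tsum_enorm_ne_top_iff_summable_norm.mpr hc') hC) ?_
    rw [← ENNReal.tsum_mul_right]
    exact ENNReal.tsum_le_tsum fun i => by gcongr; exact hXC i
  filter_upwards [summable_norm_of_tsum_eLpNorm_ne_top le_rfl
    (fun i => (hX i).const_smul (c i)) hfin] with ω hω
  exact hω.of_norm

theorem iIndepFun.tendsto_prod_mgf_tsum {X : ℕ → Ω → ℝ} (hindep : iIndepFun X μ)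
    (hX : ∀ k, AEMeasurable (X k) μ) (hnonneg : ∀ k, 0 ≤ᵐ[μ] X k)
    (hsum : ∀ᵐ ω ∂μ, Summable fun k => X k ω) {t : ℝ} (ht : t ≤ 0) :
    Tendsto (fun n => ∏ k ∈ Finset.range n, mgf (X k) μ t) atTop
      (𝓝 (mgf (fun ω => ∑' k, X k ω) μ t)) := by
  have := hindep.isProbabilityMeasure
  simp_rw [← hindep.mgf_sum₀ hX, mgf]
  refine tendsto_integral_of_dominated_convergence (fun _ => 1)
    (fun n => aestronglyMeasurable_exp_mul_sum fun k _ =>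
      (measurable_exp.comp_aemeasurable ((hX k).const_mul t)).aestronglyMeasurable)
    (integrable_const 1) (fun n => ?_) ?_
  · filter_upwards [ae_all_iff.mpr hnonneg] with ω hω
    rw [norm_of_nonneg (exp_nonneg _), exp_le_one_iff, Finset.sum_apply]
    exact mul_nonpos_of_nonpos_of_nonneg ht (Finset.sum_nonneg fun k _ => hω k)
  · filter_upwards [hsum] with ω hω
    simp_rw [Finset.sum_apply]
    exact (continuous_exp.tendsto _).comp (hω.hasSum.tendsto_sum_nat.const_mul t)

section ExponentialSeries

variable {e : ℕ → Ω → ℝ} {c : ℕ → ℝ}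

lemma aemeasurable_of_map_eq_expMeasure {X : Ω → ℝ} (hr : 0 < r)
    (hX : μ.map X = expMeasure r) : AEMeasurable X μ :=
  .of_map_ne_zero <| hX ▸ (isProbabilityMeasure_expMeasure hr).ne_zero

theorem ae_summable_mul_of_map_eq_expMeasure (hr : 0 < r)
    (hdist : ∀ k, μ.map (e k) = expMeasure r) (hc : Summable c) :
    ∀ᵐ ω ∂μ, Summable fun k => c k * e k ω :=
  ae_summable_mul_of_eLpNorm_le hc
    (fun k => (aemeasurable_of_map_eq_expMeasure hr (hdist k)).aestronglyMeasurable)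
    (fun k => by
      rw [← hdist k, eLpNorm_map_measure aestronglyMeasurable_id
        (aemeasurable_of_map_eq_expMeasure hr (hdist k))]
      rfl)
    (memLp_one_iff_integrable.mpr (integrable_id_expMeasure hr)).eLpNorm_ne_top

theorem iIndepFun.tendsto_prod_div_add_mgf_tsum_mul (hr : 0 < r) (hindep : iIndepFun e μ)
    (hdist : ∀ k, μ.map (e k) = expMeasure r) (hc0 : ∀ k, 0 ≤ c k) (hc : Summable c)
    {s : ℝ} (hs : 0 ≤ s) :
    Tendsto (fun n => ∏ k ∈ Finset.range n, r / (r + s * c k)) atTop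
      (𝓝 (mgf (fun ω => ∑' k, c k * e k ω) μ (-s))) := by
  have he k := aemeasurable_of_map_eq_expMeasure hr (hdist k)
  have hnonneg k : 0 ≤ᵐ[μ] fun ω => c k * e k ω := by
    filter_upwards [ae_of_ae_map (he k) (hdist k ▸ ae_nonneg_expMeasure r)] with ω hω
    exact mul_nonneg (hc0 k) hω
  have hfactor k : mgf (fun ω => c k * e k ω) μ (-s) = r / (r + s * c k) := by
    rw [mgf_const_mul, ← mgf_id_map (he k), hdist k,
      mgf_id_expMeasure hr (by nlinarith [hc0 k])]
    ring_nf
  have hindep' : iIndepFun (fun k ω => c k * e k ω) μ :=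
    hindep.comp (fun k x => c k * x) fun k => measurable_const_mul (c k)
  simpa only [hfactor] using
    hindep'.tendsto_prod_mgf_tsum (fun k => (he k).const_mul _) hnonneg
      (ae_summable_mul_of_map_eq_expMeasure hr hdist hc) (neg_nonpos.mpr hs)

end ExponentialSeries

end ProbabilityTheory

theorem jacobi_laplace_transform_general
    {Ω : Type*} [MeasurableSpace Ω] (μ : Measure Ω)
    (e : ℕ → Ω → ℝ)
    (hindep : iIndepFun e μ)
    (hdist : ∀ k, Measure.map (e k) μ = expMeasure 1) :
    (∀ᵐ ω ∂μ, Summable fun k : ℕ => e k ω / ((k : ℝ) + 1 - 1 / 2) ^ 2)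
    ∧ ∀ t : ℝ, 0 ≤ t →
        (∫ ω, Real.exp (-t * ((2 / π ^ 2) *
            ∑' k : ℕ, e k ω / ((k : ℝ) + 1 - 1 / 2) ^ 2)) ∂μ)
          = 1 / Real.cosh (Real.sqrt (2 * t)) := by
  set c : ℕ → ℝ := fun k => (((k : ℝ) + 1 - 1 / 2) ^ 2)⁻¹
  have hc_eq (k : ℕ) : c k = (((k : ℝ) + 1 / 2) ^ 2)⁻¹ := by simp only [c]; ring
  have hc0 (k : ℕ) : 0 ≤ c k := hc_eq k ▸ by positivity
  have hc : Summable c :=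
    ((Real.summable_one_div_nat_add_rpow (1 / 2) 2).mpr one_lt_two).congr fun k => by
      rw [hc_eq, rpow_two, sq_abs, one_div]
  simp_rw [div_eq_inv_mul (e _ _)]
  refine ⟨ae_summable_mul_of_map_eq_expMeasure one_pos hdist hc, fun t ht => ?_⟩
  have hfactor (k : ℕ) : 1 / (1 + 2 * t / π ^ 2 * c k) =
      (1 + √(2 * t) ^ 2 / (π * (k + 1 / 2)) ^ 2)⁻¹ := by
    rw [hc_eq, sq_sqrt (by positivity), one_div]
    congr 1
    field_simp
  have hlim := hindep.tendsto_prod_div_add_mgf_tsum_mul one_pos hdist hc0 hc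
    (s := 2 * t / π ^ 2) (by positivity)
  simp_rw [hfactor, Finset.prod_inv_distrib] at hlim
  calc _ = mgf (fun ω => ∑' k, c k * e k ω) μ (-(2 * t / π ^ 2)) := by
        simp only [mgf, c]
        ring_nf
    _ = (cosh √(2 * t))⁻¹ :=
      tendsto_nhds_unique hlim ((tendsto_euler_cosh_prod _).inv₀ (cosh_pos _).ne')
    _ = 1 / cosh √(2 * t) := (one_div _).symm

/-- The Jacobi (theta) distribution: if `(e k)_{k ≥ 0}` are i.i.d. rate-one exponential
random variables (here `e k` plays the role of `e_{k+1}` in the series indexed from 1),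
then the random series `J* = (2/π²) Σ_{k≥1} e_k/(k - 1/2)²` converges almost surely,
and for every `t ≥ 0` its Laplace transform is `E[exp(-t J*)] = 1/cosh √(2t)`. -/
theorem jacobi_laplace_transform
    {Ω : Type*} [MeasurableSpace Ω] (μ : Measure Ω) [IsProbabilityMeasure μ]
    (e : ℕ → Ω → ℝ)
    (hmeas : ∀ k, Measurable (e k))
    (hindep : iIndepFun e μ)
    (hdist : ∀ k, Measure.map (e k) μ = expMeasure 1) :
    (∀ᵐ ω ∂μ, Summable fun k : ℕ => e k ω / ((k : ℝ) + 1 - 1 / 2) ^ 2)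
    ∧ ∀ t : ℝ, 0 ≤ t →
        (∫ ω, Real.exp (-t * ((2 / π ^ 2) *
            ∑' k : ℕ, e k ω / ((k : ℝ) + 1 - 1 / 2) ^ 2)) ∂μ)
          = 1 / Real.cosh (Real.sqrt (2 * t)) :=
  jacobi_laplace_transform_general μ e hindep hdist
end

section
/- For every r > 0 and every s ∈ ℝ, log cosh(s) ≤ (tanh(r)/(2r))·s² + log cosh(r) − (r·tanh(r))/2, with equality if and only if |s| = r. -/
/-!
Let `g(s)` be the quadratic majorant minus `log (cosh s)`. Both are even in `s`, so it suffices to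
take `s ≥ 0`. We have `g(r) = 0` and `g'(s) = s (tanh r / r - tanh s / s)`. Since `tanh` is strictly
concave on `[0, ∞)` and vanishes at `0`, the secant slope `tanh s / s` is strictly decreasing there,
so `g'` has the sign of `s - r` and `r` is the strict minimum of `g` on `[0, ∞)`.
-/

open Real Set

namespace Real

theorem hasDerivAt_tanh (x : ℝ) : HasDerivAt tanh (cosh x ^ 2)⁻¹ x := by
  have h := (hasDerivAt_sinh x).div (hasDerivAt_cosh x) (cosh_pos x).ne'
  rw [show sinh / cosh = tanh from funext fun y => (tanh_eq_sinh_div_cosh y).symm] at h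
  rwa [← sq, ← sq, cosh_sq_sub_sinh_sq, one_div] at h

theorem continuous_tanh : Continuous tanh :=
  continuous_iff_continuousAt.2 fun x => (hasDerivAt_tanh x).continuousAt

theorem strictConcaveOn_tanh : StrictConcaveOn ℝ (Ici 0) tanh := by
  refine StrictAntiOn.strictConcaveOn_of_deriv (convex_Ici 0) continuous_tanh.continuousOn ?_
  rw [interior_Ici, show deriv tanh = fun x => (cosh x ^ 2)⁻¹ from
    funext fun x => (hasDerivAt_tanh x).deriv]
  intro x hx y hy hxy
  have hcosh : cosh x < cosh y :=
    cosh_strictMonoOn (Ioi_subset_Ici_self hx) (Ioi_subset_Ici_self hy) hxy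
  show (cosh y ^ 2)⁻¹ < (cosh x ^ 2)⁻¹
  gcongr

theorem strictAntiOn_tanh_div_self : StrictAntiOn (fun x => tanh x / x) (Ioi 0) := by
  intro x hx y hy hxy
  simpa using strictConcaveOn_tanh.secant_strict_mono self_mem_Ici (Ioi_subset_Ici_self hx)
    (Ioi_subset_Ici_self hy) (ne_of_gt hx) (ne_of_gt hy) hxy

theorem hasDerivAt_log_cosh (x : ℝ) : HasDerivAt (fun y => log (cosh y)) (tanh x) x := by
  simpa [← tanh_eq_sinh_div_cosh] using (hasDerivAt_cosh x).log (cosh_pos x).ne'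

end Real

theorem apply_lt_apply_of_hasDerivAt_neg_of_pos {f f' : ℝ → ℝ} {a r x : ℝ}
    (hf : ∀ y, HasDerivAt f (f' y) y) (hneg : ∀ y ∈ Ioo a r, f' y < 0)
    (hpos : ∀ y ∈ Ioi r, 0 < f' y) (hax : a ≤ x) (hxr : x ≠ r) : f r < f x := by
  have hcont : Continuous f := continuous_iff_continuousAt.2 fun y => (hf y).continuousAt
  have hderiv : deriv f = f' := funext fun y => (hf y).deriv
  rcases hxr.lt_or_gt with hxr | hrx
  · have hanti : StrictAntiOn f (Icc a r) :=
      strictAntiOn_of_deriv_neg (convex_Icc a r) hcont.continuousOn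
        (by simpa only [interior_Icc, hderiv] using hneg)
    exact hanti ⟨hax, hxr.le⟩ ⟨hax.trans hxr.le, le_rfl⟩ hxr
  · have hmono : StrictMonoOn f (Ici r) :=
      strictMonoOn_of_deriv_pos (convex_Ici r) hcont.continuousOn
        (by simpa only [interior_Ici, hderiv] using hpos)
    exact hmono self_mem_Ici hrx.le hrx

/-- `(φ'(r) / (2r)) s² + F(r)` for `φ = log ∘ cosh`, where `φ' = tanh`. -/
noncomputable def logCoshMajorant (r s : ℝ) : ℝ :=
  tanh r / (2 * r) * s ^ 2 + log (cosh r) - r * tanh r / 2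

theorem logCoshMajorant_self (r : ℝ) : logCoshMajorant r r = log (cosh r) := by
  unfold logCoshMajorant
  field_simp
  ring

theorem logCoshMajorant_abs (r s : ℝ) : logCoshMajorant r |s| = logCoshMajorant r s := by
  simp only [logCoshMajorant, sq_abs]

theorem hasDerivAt_logCoshMajorant_sub_log_cosh (r s : ℝ) :
    HasDerivAt (fun s => logCoshMajorant r s - log (cosh s)) (tanh r / r * s - tanh s) s := by
  have hq : HasDerivAt (logCoshMajorant r) (tanh r / r * s) s :=
    (((hasDerivAt_pow 2 s).const_mul (tanh r / (2 * r))).add_const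
      (log (cosh r))).sub_const (r * tanh r / 2) |>.congr_deriv (by ring)
  exact hq.sub (hasDerivAt_log_cosh s)

theorem log_cosh_lt_logCoshMajorant {r s : ℝ} (hr : 0 < r) (hs : |s| ≠ r) :
    log (cosh s) < logCoshMajorant r s := by
  have hsign : ∀ y, 0 < y → tanh r / r * y - tanh y = y * (tanh r / r - tanh y / y) := by
    intro y hy
    field_simp
  have key := apply_lt_apply_of_hasDerivAt_neg_of_pos (a := 0)
    (hasDerivAt_logCoshMajorant_sub_log_cosh r) ?_ ?_ (abs_nonneg s) hs
  · rwa [logCoshMajorant_self r, sub_self, logCoshMajorant_abs, cosh_abs, sub_pos] at key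
  · rintro y ⟨hy, hyr⟩
    rw [hsign y hy]
    exact mul_neg_of_pos_of_neg hy (sub_neg.2 (strictAntiOn_tanh_div_self hy hr hyr))
  · intro y hry
    have hy : 0 < y := hr.trans hry
    rw [hsign y hy]
    exact mul_pos hy (sub_pos.2 (strictAntiOn_tanh_div_self hr hy hry))

/-- Ono–Miyabe auxiliary-function (majorization) inequality for `log cosh`:
for every `r > 0` and every `s`,
`log cosh s ≤ (tanh r / (2r)) s² + log cosh r - r tanh r / 2`,
with equality if and only if `|s| = r`. -/
theorem logcosh_majorization (r : ℝ) (hr : 0 < r) (s : ℝ) :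
    Real.log (Real.cosh s)
      ≤ (Real.tanh r / (2 * r)) * s ^ 2 + Real.log (Real.cosh r) - r * Real.tanh r / 2
    ∧ (Real.log (Real.cosh s)
        = (Real.tanh r / (2 * r)) * s ^ 2 + Real.log (Real.cosh r) - r * Real.tanh r / 2
        ↔ |s| = r) := by
  change log (cosh s) ≤ logCoshMajorant r s ∧ (log (cosh s) = logCoshMajorant r s ↔ |s| = r)
  by_cases hs : |s| = r
  · have heq : log (cosh s) = logCoshMajorant r s := by
      rw [← cosh_abs, ← logCoshMajorant_abs, hs, logCoshMajorant_self r]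
    exact ⟨heq.le, iff_of_true heq hs⟩
  · have hlt := log_cosh_lt_logCoshMajorant hr hs
    exact ⟨hlt.le, iff_of_false hlt.ne hs⟩
end

section
/- For every n ≥ 1, every x₁, …, x_n ∈ ℝ, and every α ∈ ℝ, log(Σ_{i=1}^n e^{x_i}) ≤ α + Σ_{i=1}^n log(1 + e^{x_i − α}). -/
open Real Finset

theorem Finset.sum_le_prod_one_add {ι R : Type*} [CommSemiring R] [PartialOrder R]
    [IsOrderedRing R] (s : Finset ι) {y : ι → R} (hy : ∀ i ∈ s, 0 ≤ y i) :
    ∑ i ∈ s, y i ≤ ∏ i ∈ s, (1 + y i) := by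
  classical
  induction s using Finset.induction_on with
  | empty => simp
  | insert a s ha ih =>
    rw [sum_insert ha, prod_insert ha, one_add_mul, add_comm (y a)]
    have hya : 0 ≤ y a := hy a (mem_insert_self a s)
    have hs : ∀ i ∈ s, 0 ≤ y i := fun i hi => hy i (mem_insert_of_mem hi)
    have one_le_prod : 1 ≤ ∏ i ∈ s, (1 + y i) :=
      one_le_prod fun i hi => le_add_of_nonneg_right (hs i hi)
    gcongr
    · exact ih hs
    · exact le_mul_of_one_le_right hya one_le_prod

theorem Real.log_sum_exp_le_add_sum_log_one_add_exp {ι : Type*} {s : Finset ι}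
    (hs : s.Nonempty) (x : ι → ℝ) (α : ℝ) :
    log (∑ i ∈ s, exp (x i)) ≤ α + ∑ i ∈ s, log (1 + exp (x i - α)) := by
  have hsum_pos : 0 < ∑ i ∈ s, exp (x i - α) := sum_pos (fun i _ => exp_pos _) hs
  calc log (∑ i ∈ s, exp (x i))
      = log (exp α * ∑ i ∈ s, exp (x i - α)) := by
        simp only [mul_sum, ← exp_add, add_sub_cancel]
    _ = α + log (∑ i ∈ s, exp (x i - α)) := by
        rw [log_mul (exp_ne_zero α) hsum_pos.ne', log_exp]
    _ ≤ α + log (∏ i ∈ s, (1 + exp (x i - α))) := by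
        gcongr
        exact sum_le_prod_one_add s fun i _ => (exp_pos _).le
    _ = α + ∑ i ∈ s, log (1 + exp (x i - α)) := by
        rw [log_prod fun i _ => by positivity]

/-- Bouchard's first bound for log-sum-exp: for every `n ≥ 1`, reals `x₁,…,xₙ` and
every `α`, `log (Σ_i e^{x_i}) ≤ α + Σ_i log (1 + e^{x_i - α})`. -/
theorem bouchard_logsumexp_bound (n : ℕ) (hn : 1 ≤ n) (x : Fin n → ℝ) (α : ℝ) :
    Real.log (∑ i, Real.exp (x i)) ≤ α + ∑ i, Real.log (1 + Real.exp (x i - α)) :=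
  log_sum_exp_le_add_sum_log_one_add_exp (univ_nonempty_iff.mpr ⟨⟨0, hn⟩⟩) x α
end
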